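/- Let N ≥ 2 and 1 < p < N, let x₀ ∈ ℝ^N and ρ > 0, and let f := ρ^{−p} · 1_{B_ρ(x₀)} be ρ^{−p} times the indicator of the open ball B_ρ(x₀). Then for every x ∈ ℝ^N with |x − x₀| ≥ ρ + ρ^{(N−p)/(N−1)}, one has W_p^f(x, ∞) ≤ ((p−1)/(N−p)) · ω_N^{1/(p−1)} · ρ^{(N−p)/(N−1)}, where ω_N is the Lebesgue volume of the unit ball in ℝ^N. -/

import Mathlib

open MeasureTheory Metric Set Filter
open scoped Topology

/-- The Wolff potential `W_{β,p}^f(x,∞)`. -/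
noncomputable def wolffTop (N : ℕ) (β p : ℝ) (f : EuclideanSpace ℝ (Fin N) → ℝ)
    (x : EuclideanSpace ℝ (Fin N)) : ℝ :=
  ∫ r in Set.Ioi (0:ℝ),
    (1/r) * ((r ^ (β*p - (N:ℝ)) * ∫ y in Metric.ball x r, f y) ^ (1/(p-1)))

/-!
If the ball integrals `∫_{B_r(x)} f` vanish for `r ≤ d` and are at most `M` beyond, the integrand
of the Wolff potential is at most `M^{1/(p-1)} r^{(βp-N)/(p-1) - 1}` on `(d, ∞)` and zero before,
which integrates to `(p-1)/(N-βp) · M^{1/(p-1)} d^{(βp-N)/(p-1)}`. For `f = ρ^{-p} 1_{B_ρ(x₀)}`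
one may take `M = ω_N ρ^{N-p}` and `d = ρ^{(N-p)/(N-1)}`, since `|x - x₀| ≥ ρ + d` makes
`B_r(x)` miss `B_ρ(x₀)` for `r ≤ d`; the exponents then combine to `ρ^{(N-p)/(N-1)}`.
-/

lemma one_div_mul_rpow_mul {r M : ℝ} (hr : 0 < r) (hM : 0 ≤ M) (a q : ℝ) :
    1 / r * (r ^ a * M) ^ q = M ^ q * r ^ (a * q - 1) := by
  rw [Real.mul_rpow (Real.rpow_nonneg hr.le _) hM, ← Real.rpow_mul hr.le, Real.rpow_sub hr,
    Real.rpow_one]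
  ring

theorem wolffTop_le_of_integral_ball_le {N : ℕ} {β p : ℝ} {f : EuclideanSpace ℝ (Fin N) → ℝ}
    {x : EuclideanSpace ℝ (Fin N)} {d M : ℝ} (hp : 1 < p) (hβp : β * p < N)
    (hf : ∀ y, 0 ≤ f y) (hd : 0 < d) (hM : 0 ≤ M)
    (h_small : ∀ r, r ≤ d → ∫ y in ball x r, f y = 0)
    (h_large : ∀ r, d < r → ∫ y in ball x r, f y ≤ M) :
    wolffTop N β p f x
      ≤ (p - 1) / (N - β * p) * M ^ (1 / (p - 1)) * d ^ ((β * p - N) / (p - 1)) := by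
  set q := 1 / (p - 1)
  set a := β * p - N
  have hq : 0 < q := one_div_pos.mpr (sub_pos.mpr hp)
  have haq : a * q < 0 := mul_neg_of_neg_of_pos (sub_neg.mpr hβp) hq
  set g : ℝ → ℝ := (Ioi d).indicator (fun r => M ^ q * r ^ (a * q - 1))
  have hg_nonneg : ∀ r, 0 ≤ g r := fun r =>
    indicator_nonneg (fun r hr => by have : 0 < r := hd.trans hr; positivity) r
  have hf_ball : ∀ r, 0 ≤ ∫ y in ball x r, f y := fun r => integral_nonneg hf
  have h_le_g : ∀ r ∈ Ioi (0 : ℝ), 1 / r * (r ^ a * ∫ y in ball x r, f y) ^ q ≤ g r := by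
    intro r (hr : 0 < r)
    rcases le_or_gt r d with hrd | hrd
    · rw [h_small r hrd, mul_zero, Real.zero_rpow hq.ne', mul_zero]
      exact hg_nonneg r
    · rw [show g r = M ^ q * r ^ (a * q - 1) from indicator_of_mem hrd _,
        ← one_div_mul_rpow_mul hr hM]
      gcongr
      · exact mul_nonneg (Real.rpow_nonneg hr.le _) (hf_ball r)
      · exact h_large r hrd
  have hg_int : IntegrableOn g (Ioi 0) := by
    have : IntegrableOn (fun r => M ^ q * r ^ (a * q - 1)) (Ioi d) :=
      (integrableOn_Ioi_rpow_of_lt (by linarith) hd).const_mul _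
    exact (this.integrable_indicator measurableSet_Ioi).restrict
  calc wolffTop N β p f x ≤ ∫ r in Ioi 0, g r := by
        refine integral_mono_of_nonneg ?_ hg_int ?_ <;>
          filter_upwards [ae_restrict_mem measurableSet_Ioi] with r (hr : 0 < r)
        · have := hf_ball r
          positivity
        · exact h_le_g r hr
    _ = M ^ q * (-d ^ (a * q) / (a * q)) := by
        rw [setIntegral_indicator measurableSet_Ioi, inter_eq_right.mpr (Ioi_subset_Ioi hd.le),
          integral_const_mul,
          integral_Ioi_rpow_of_lt (by linarith) hd, sub_add_cancel]
    _ = -1 / (a * q) * M ^ q * d ^ (a * q) := by ring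
    _ = (p - 1) / (N - β * p) * M ^ q * d ^ (a / (p - 1)) := by
        have : p - 1 ≠ 0 := (sub_pos.mpr hp).ne'
        have : β * p - N ≠ 0 := (sub_neg.mpr hβp).ne
        have : (N : ℝ) - β * p ≠ 0 := (sub_pos.mpr hβp).ne'
        rw [show -1 / (a * q) = (p - 1) / (N - β * p) by simp only [a, q]; field_simp; ring,
          mul_one_div]

lemma rpow_div_sub_one_mul_rpow_div_sub_one {ρ n p : ℝ} (hρ : 0 < ρ) (hp : p ≠ 1) (hn : n ≠ 1) :
    ρ ^ ((n - p) / (p - 1)) * (ρ ^ ((n - p) / (n - 1))) ^ ((p - n) / (p - 1))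
      = ρ ^ ((n - p) / (n - 1)) := by
  rw [← Real.rpow_mul hρ.le, ← Real.rpow_add hρ]
  congr 1
  have : p - 1 ≠ 0 := sub_ne_zero.mpr hp
  have : n - 1 ≠ 0 := sub_ne_zero.mpr hn
  field_simp
  ring

lemma setIntegral_const_mul_indicator_one {α : Type*} [MeasurableSpace α] {μ : Measure α}
    {s t : Set α} (ht : MeasurableSet t) (c : ℝ) :
    ∫ y in s, c * t.indicator (fun _ => (1 : ℝ)) y ∂μ = c * μ.real (s ∩ t) := by
  rw [integral_const_mul, setIntegral_indicator ht, setIntegral_const, smul_eq_mul, mul_one]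

lemma setIntegral_const_mul_indicator_ball_le {N : ℕ} {c ρ : ℝ} (hc : 0 ≤ c) (hρ : 0 < ρ)
    (s : Set (EuclideanSpace ℝ (Fin N))) (x₀ : EuclideanSpace ℝ (Fin N)) :
    ∫ y in s, c * (ball x₀ ρ).indicator (fun _ => (1 : ℝ)) y
      ≤ c * ((volume (ball (0 : EuclideanSpace ℝ (Fin N)) 1)).toReal * ρ ^ (N : ℝ)) := by
  rw [setIntegral_const_mul_indicator_one measurableSet_ball]
  gcongr
  calc volume.real (s ∩ ball x₀ ρ) ≤ volume.real (ball x₀ ρ) :=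
        measureReal_mono inter_subset_right measure_ball_lt_top.ne
    _ = _ := by
        rw [measureReal_def, Measure.addHaar_ball_of_pos volume x₀ hρ,
          finrank_euclideanSpace_fin, ENNReal.toReal_mul, ENNReal.toReal_ofReal (by positivity),
          Real.rpow_natCast, mul_comm]

theorem wolffTop_far_estimate_general {N : ℕ} (p : ℝ)
    (hp : 1 < p) (hpN : p < N)
    (x₀ : EuclideanSpace ℝ (Fin N)) (ρ : ℝ) (hρ : 0 < ρ)
    (x : EuclideanSpace ℝ (Fin N))
    (hx : ρ + ρ ^ (((N:ℝ)-p)/((N:ℝ)-1)) ≤ ‖x - x₀‖) :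
    wolffTop N 1 p (fun y => ρ ^ (-p) * (ball x₀ ρ).indicator (fun _ => (1:ℝ)) y) x
      ≤ ((p-1)/((N:ℝ)-p))
          * ((volume (ball (0 : EuclideanSpace ℝ (Fin N)) 1)).toReal) ^ (1/(p-1))
          * ρ ^ (((N:ℝ)-p)/((N:ℝ)-1)) := by
  set ω := (volume (ball (0 : EuclideanSpace ℝ (Fin N)) 1)).toReal
  set f := fun y => ρ ^ (-p) * (ball x₀ ρ).indicator (fun _ => (1:ℝ)) y
  have hf : ∀ y, 0 ≤ f y := fun y =>
    mul_nonneg (by positivity) (indicator_nonneg (fun _ _ => zero_le_one) y)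
  set d := ρ ^ (((N:ℝ)-p)/((N:ℝ)-1))
  have h_small : ∀ r ≤ d, ∫ y in ball x r, f y = 0 := by
    intro r hr
    have : Disjoint (ball x r) (ball x₀ ρ) :=
      ball_disjoint_ball (by rw [dist_eq_norm]; linarith)
    rw [setIntegral_const_mul_indicator_one measurableSet_ball, this.inter_eq, measureReal_empty,
      mul_zero]
  have h_large : ∀ r, d < r → ∫ y in ball x r, f y ≤ ω * ρ ^ ((N : ℝ) - p) := fun r _ =>
    calc _ ≤ ρ ^ (-p) * (ω * ρ ^ (N : ℝ)) :=
          setIntegral_const_mul_indicator_ball_le (by positivity) hρ _ x₀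
      _ = ω * ρ ^ ((N : ℝ) - p) := by
          rw [sub_eq_neg_add, Real.rpow_add hρ]
          ring
  calc _ ≤ (p - 1) / (N - 1 * p) * (ω * ρ ^ ((N : ℝ) - p)) ^ (1 / (p - 1))
          * d ^ ((1 * p - N) / (p - 1)) :=
        wolffTop_le_of_integral_ball_le hp (by linarith) hf (by positivity) (by positivity)
          h_small h_large
    _ = _ := by
        rw [one_mul, Real.mul_rpow (by positivity) (by positivity), ← Real.rpow_mul hρ.le,
          mul_one_div, mul_assoc, mul_assoc (ω ^ _), show ρ ^ (_ : ℝ) * d ^ (_ : ℝ) = d from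
            rpow_div_sub_one_mul_rpow_div_sub_one hρ hp.ne' (by linarith)]
        ring

/-- Display (A.3): for `f = ρ^{-p} 1_{B_ρ(x₀)}`, `1 < p < N`, and any point `x` with
`|x - x₀| ≥ ρ + ρ^{(N-p)/(N-1)}`, one has
`W_p^f(x, ∞) ≤ ((p-1)/(N-p)) ω_N^{1/(p-1)} ρ^{(N-p)/(N-1)}`. -/
theorem wolffTop_far_estimate {N : ℕ} (hN : 2 ≤ N) (p : ℝ)
    (hp : 1 < p) (hpN : p < N)
    (x₀ : EuclideanSpace ℝ (Fin N)) (ρ : ℝ) (hρ : 0 < ρ)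
    (x : EuclideanSpace ℝ (Fin N))
    (hx : ρ + ρ ^ (((N:ℝ)-p)/((N:ℝ)-1)) ≤ ‖x - x₀‖) :
    wolffTop N 1 p (fun y => ρ ^ (-p) * (ball x₀ ρ).indicator (fun _ => (1:ℝ)) y) x
      ≤ ((p-1)/((N:ℝ)-p))
          * ((volume (ball (0 : EuclideanSpace ℝ (Fin N)) 1)).toReal) ^ (1/(p-1))
          * ρ ^ (((N:ℝ)-p)/((N:ℝ)-1)) :=
  wolffTop_far_estimate_general p hp hpN x₀ ρ hρ x hx
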